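/- Let α be a real number with 0 < α < 1/2 and let (u_n)_{n ≥ 0} be a sequence with values in {0,1} ⊆ ℝ that contains no occurrence of the block 11 (i.e., for no n do u_n = u_{n+1} = 1) and whose frequency of 1's equals α, i.e., #{n < N : u_n = 1}/N → α as N → ∞ (this holds in particular for a Sturmian sequence of slope α avoiding the block 11). Then the inconstancy of the sequence exists and equals ℐ((u_n)) = 1 + 2(√2 − 1)α; in particular it lies in the open interval (1, √2). -/

import Mathlib

noncomputable section
open MeasureTheory Real Set Filter
open scoped ENNReal

/-- The point `(x, y)` of the Euclidean plane. -/
def pt (x y : ℝ) : EuclideanSpace ℝ (Fin 2) := WithLp.toLp 2 ![x, y]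

/-- The polygonal curve `Γ_N` through `(0,u₀), (1,u₁), …, (N,u_N)`: the union of the
segments joining `(i, u_i)` to `(i+1, u_{i+1})` for `i = 0, …, N−1`. -/
def polyCurve (u : ℕ → ℝ) (N : ℕ) : Set (EuclideanSpace ℝ (Fin 2)) :=
  ⋃ i ∈ Finset.range N, segment ℝ (pt i (u i)) (pt (i + 1) (u (i + 1)))

/-- The length `ℓ(Γ_N) = Σ_{i<N} √(1 + (u_{i+1} − u_i)²)` of the polygonal curve. -/
def polyLength (u : ℕ → ℝ) (N : ℕ) : ℝ :=
  ∑ i ∈ Finset.range N, Real.sqrt (1 + (u (i + 1) - u i) ^ 2)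

/-- The perimeter `δ(Γ_N)` of the convex hull of the polygonal curve: the
one-dimensional Hausdorff measure of the frontier of the convex hull. -/
def polyDelta (u : ℕ → ℝ) (N : ℕ) : ℝ :=
  (μH[1] (frontier (convexHull ℝ (polyCurve u N)))).toReal

/-- The inconstancy `ℐ(Γ_N) := 2 ℓ(Γ_N) / δ(Γ_N)` of the polygonal curve. -/
def polyIncon (u : ℕ → ℝ) (N : ℕ) : ℝ :=
  2 * polyLength u N / polyDelta u N

/-! Since `u` is `{0,1}`-valued without `11`, every step of `Γ_N` is horizontal (length `1`) or
diagonal (length `√2`), and there are about `2αN` diagonal steps, so `ℓ(Γ_N) ~ (1 + 2(√2 - 1)α) N`.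
The convex hull of `Γ_N` is the trapezoid whose horizontal sides join the extreme vertices at
heights `0` and `1`. The bottom side has length `N - O(1)`; the top side ends at the last `1`
before `N`, which is `N - o(N)` because the `1`s have positive density. As the trapezoid lies in
`[0, N] × [0, 1]`, this gives `δ(Γ_N) ~ 2N`. -/

open scoped Topology Finset

lemma tendsto_comp_succ_div_natCast {f : ℕ → ℝ} {α : ℝ}
    (hf : Tendsto (fun n : ℕ ↦ f n / n) atTop (𝓝 α)) :
    Tendsto (fun n : ℕ ↦ f (n + 1) / n) atTop (𝓝 α) := by
  have h := (hf.comp (tendsto_add_atTop_nat 1)).mul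
    (tendsto_one_div_atTop_nhds_zero_nat.const_add (1 : ℝ))
  rw [add_zero, mul_one] at h
  refine h.congr' <| (eventually_ne_atTop 0).mono fun n hn ↦ ?_
  have : (n : ℝ) ≠ 0 := Nat.cast_ne_zero.2 hn
  simp only [Function.comp_apply, Nat.cast_add_one]
  field_simp

lemma tendsto_natCast_div_of_comp_eq {f : ℕ → ℝ} {g : ℕ → ℕ} {α : ℝ} (hα : α ≠ 0)
    (hf : Tendsto (fun n : ℕ ↦ f n / n) atTop (𝓝 α)) (hg : Tendsto g atTop atTop)
    (hfg : ∀ n, f (g n) = f n) :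
    Tendsto (fun n ↦ (g n : ℝ) / n) atTop (𝓝 1) := by
  have h := hf.div (hf.comp hg) hα
  rw [div_self hα] at h
  refine h.congr' ?_
  filter_upwards [hf.eventually_ne hα, hg.eventually_ne_atTop 0, eventually_ne_atTop 0]
    with n hfn hgn hn
  have : f n ≠ 0 := fun h ↦ hfn (by simp [h])
  have : (g n : ℝ) ≠ 0 := Nat.cast_ne_zero.2 hgn
  have : (n : ℝ) ≠ 0 := Nat.cast_ne_zero.2 hn
  change f n / n / (f (g n) / g n) = g n / n
  rw [hfg]
  field_simp

lemma tendsto_findGreatest_div_natCast {P : ℕ → Prop} [DecidablePred P] {α : ℝ} (hα : 0 < α)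
    (h : Tendsto (fun N : ℕ ↦ (#{n ∈ Finset.range N | P n} : ℝ) / N) atTop (𝓝 α)) :
    Tendsto (fun N : ℕ ↦ (Nat.findGreatest P N : ℝ) / N) atTop (𝓝 1) := by
  set cnt : ℕ → ℝ := fun N ↦ #{n ∈ Finset.range N | P n}
  have hcnt : ∀ N, cnt (Nat.findGreatest P N + 1) = cnt (N + 1) := fun N ↦ by
    simp only [cnt]
    congr 2
    ext n
    simp only [Finset.mem_filter, Finset.mem_range, Nat.lt_succ_iff]
    exact ⟨fun h ↦ ⟨h.1.trans (Nat.findGreatest_le N), h.2⟩,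
      fun h ↦ ⟨Nat.le_findGreatest h.1 h.2, h.2⟩⟩
  have hshift := tendsto_comp_succ_div_natCast (f := cnt) h
  have hcnt_top : Tendsto (fun N ↦ cnt (N + 1)) atTop atTop := by
    refine (hshift.pos_mul_atTop hα tendsto_natCast_atTop_atTop).congr' ?_
    filter_upwards [eventually_ne_atTop 0] with N hN
    exact div_mul_cancel₀ _ (Nat.cast_ne_zero.2 hN)
  have hle : ∀ N, cnt (N + 1) - 1 ≤ Nat.findGreatest P N := fun N ↦ by
    have : cnt (Nat.findGreatest P N + 1) ≤ Nat.findGreatest P N + 1 := by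
      simp only [cnt]
      exact_mod_cast (Finset.card_filter_le _ _).trans (Finset.card_range _).le
    linarith [hcnt N]
  have hgreat : Tendsto (Nat.findGreatest P) atTop atTop :=
    tendsto_natCast_atTop_iff.1 <| tendsto_atTop_mono hle <|
      tendsto_atTop_add_const_right _ (-1) hcnt_top
  exact tendsto_natCast_div_of_comp_eq hα.ne' hshift hgreat hcnt

lemma Nat.isLeast_find_of_find_le {P : ℕ → Prop} [DecidablePred P] (h : ∃ n, P n) {N : ℕ}
    (hN : Nat.find h ≤ N) : IsLeast {i | i ≤ N ∧ P i} (Nat.find h) :=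
  ⟨⟨hN, Nat.find_spec h⟩, fun _ hi ↦ Nat.find_min' h hi.2⟩

lemma Nat.isGreatest_findGreatest {P : ℕ → Prop} [DecidablePred P] {m N : ℕ} (hm : m ≤ N)
    (hP : P m) : IsGreatest {i | i ≤ N ∧ P i} (Nat.findGreatest P N) :=
  ⟨⟨Nat.findGreatest_le N, Nat.findGreatest_spec hm hP⟩, fun _ hi ↦ Nat.le_findGreatest hi.1 hi.2⟩

@[simp] lemma pt_apply_zero (x y : ℝ) : pt x y 0 = x := rfl

@[simp] lemma pt_apply_one (x y : ℝ) : pt x y 1 = y := rfl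

lemma pt_eta (p : EuclideanSpace ℝ (Fin 2)) : pt (p 0) (p 1) = p := by
  ext i; fin_cases i <;> rfl

lemma smul_pt_add_smul_pt (s t x₁ y₁ x₂ y₂ : ℝ) :
    s • pt x₁ y₁ + t • pt x₂ y₂ = pt (s * x₁ + t * x₂) (s * y₁ + t * y₂) := by
  ext i; fin_cases i <;> simp [pt]

lemma dist_pt_pt (x₁ y₁ x₂ y₂ : ℝ) :
    dist (pt x₁ y₁) (pt x₂ y₂) = √((x₁ - x₂) ^ 2 + (y₁ - y₂) ^ 2) := by
  simp [EuclideanSpace.dist_eq, Fin.sum_univ_two, Real.dist_eq, sq_abs]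

lemma pt_mem_segment_of_mem_Icc {l r x : ℝ} (y : ℝ) (hx : x ∈ Icc l r) :
    pt x y ∈ segment ℝ (pt l y) (pt r y) := by
  rw [← segment_eq_Icc (hx.1.trans hx.2)] at hx
  obtain ⟨s, t, hs, ht, hst, rfl⟩ := hx
  refine ⟨s, t, hs, ht, hst, ?_⟩
  rw [smul_pt_add_smul_pt, ← add_mul, hst, one_mul, smul_eq_mul, smul_eq_mul]

lemma apply_one_eq_of_mem_segment {x₁ x₂ y : ℝ} {p : EuclideanSpace ℝ (Fin 2)}
    (hp : p ∈ segment ℝ (pt x₁ y) (pt x₂ y)) : p 1 = y := by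
  obtain ⟨s, t, -, -, hst, rfl⟩ := hp
  rw [smul_pt_add_smul_pt, pt_apply_one, ← add_mul, hst, one_mul]

lemma pt_mem_segment_of_mem_Icc_zero_one (x₀ x₁ : ℝ) {y : ℝ} (hy : y ∈ Icc 0 1) :
    pt (x₀ * (1 - y) + x₁ * y) y ∈ segment ℝ (pt x₀ 0) (pt x₁ 1) := by
  rw [segment_eq_image]
  exact ⟨y, hy, by dsimp only; rw [smul_pt_add_smul_pt]; congr 1 <;> ring⟩

lemma hausdorffMeasure_segment_horizontal {x₁ x₂ : ℝ} (y : ℝ) (h : x₁ ≤ x₂) :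
    μH[1] (segment ℝ (pt x₁ y) (pt x₂ y)) = ENNReal.ofReal (x₂ - x₁) := by
  rw [hausdorffMeasure_segment, edist_dist, dist_pt_pt, sub_self, zero_pow two_ne_zero, add_zero,
    Real.sqrt_sq_eq_abs, abs_sub_comm, abs_of_nonneg (sub_nonneg.2 h)]

lemma hausdorffMeasure_segment_slanted (x₀ x₁ : ℝ) :
    μH[1] (segment ℝ (pt x₀ 0) (pt x₁ 1)) = ENNReal.ofReal √(1 + (x₁ - x₀) ^ 2) := by
  rw [hausdorffMeasure_segment, edist_dist, dist_pt_pt]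
  ring_nf

/-- The closed trapezoid with horizontal sides `[a,b] × {0}` and `[c,d] × {1}`. -/
def trapezoid (a b c d : ℝ) : Set (EuclideanSpace ℝ (Fin 2)) :=
  {p | 0 ≤ p 1 ∧ p 1 ≤ 1 ∧ a * (1 - p 1) + c * p 1 ≤ p 0 ∧ p 0 ≤ b * (1 - p 1) + d * p 1}

section trapezoid

variable {a b c d : ℝ}

lemma pt_mem_trapezoid {x y : ℝ} (hy : y ∈ Icc 0 1)
    (hl : a * (1 - y) + c * y ≤ x) (hr : x ≤ b * (1 - y) + d * y) :
    pt x y ∈ trapezoid a b c d :=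
  ⟨hy.1, hy.2, hl, hr⟩

lemma vertices_subset_trapezoid (hab : a ≤ b) (hcd : c ≤ d) :
    {pt a 0, pt b 0, pt c 1, pt d 1} ⊆ trapezoid a b c d := by
  rintro p (rfl | rfl | rfl | rfl | rfl) <;>
    exact pt_mem_trapezoid (by norm_num) (by linarith) (by linarith)

lemma convex_trapezoid : Convex ℝ (trapezoid a b c d) := by
  rintro p ⟨hp0, hp1, hpl, hpr⟩ q ⟨hq0, hq1, hql, hqr⟩ s t hs ht hst
  obtain rfl : t = 1 - s := by linarith
  change 0 ≤ s * p 1 + (1 - s) * q 1 ∧ s * p 1 + (1 - s) * q 1 ≤ 1 ∧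
    a * (1 - (s * p 1 + (1 - s) * q 1)) + c * (s * p 1 + (1 - s) * q 1) ≤ s * p 0 + (1 - s) * q 0 ∧
    s * p 0 + (1 - s) * q 0 ≤ b * (1 - (s * p 1 + (1 - s) * q 1)) + d * (s * p 1 + (1 - s) * q 1)
  refine ⟨by positivity, by nlinarith, ?_, ?_⟩
  · nlinarith [mul_le_mul_of_nonneg_left hpl hs, mul_le_mul_of_nonneg_left hql ht]
  · nlinarith [mul_le_mul_of_nonneg_left hpr hs, mul_le_mul_of_nonneg_left hqr ht]

lemma convexHull_eq_trapezoid (hab : a ≤ b) (hcd : c ≤ d) :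
    convexHull ℝ {pt a 0, pt b 0, pt c 1, pt d 1} = trapezoid a b c d := by
  refine (convexHull_min (vertices_subset_trapezoid hab hcd) convex_trapezoid).antisymm
    fun p ⟨h0, h1, hl, hr⟩ ↦ ?_
  have hL := segment_subset_convexHull (s := {pt a 0, pt b 0, pt c 1, pt d 1}) (by simp)
    (by simp) (pt_mem_segment_of_mem_Icc_zero_one a c ⟨h0, h1⟩)
  have hR := segment_subset_convexHull (s := {pt a 0, pt b 0, pt c 1, pt d 1}) (by simp)
    (by simp) (pt_mem_segment_of_mem_Icc_zero_one b d ⟨h0, h1⟩)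
  simpa only [pt_eta] using (convex_convexHull ℝ _).segment_subset hL hR
    (pt_mem_segment_of_mem_Icc _ ⟨hl, hr⟩)

lemma isClosed_trapezoid : IsClosed (trapezoid a b c d) := by
  simp only [trapezoid, ofPred_and]
  refine .inter (isClosed_le ?_ ?_) (.inter (isClosed_le ?_ ?_) (.inter (isClosed_le ?_ ?_)
    (isClosed_le ?_ ?_))) <;> fun_prop

lemma setOf_lt_subset_interior_trapezoid :
    {p : EuclideanSpace ℝ (Fin 2) | 0 < p 1 ∧ p 1 < 1 ∧ a * (1 - p 1) + c * p 1 < p 0 ∧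
      p 0 < b * (1 - p 1) + d * p 1} ⊆ interior (trapezoid a b c d) := by
  refine interior_maximal (fun p hp ↦ ⟨hp.1.le, hp.2.1.le, hp.2.2.1.le, hp.2.2.2.le⟩) ?_
  simp only [ofPred_and]
  refine .inter (isOpen_lt ?_ ?_) (.inter (isOpen_lt ?_ ?_) (.inter (isOpen_lt ?_ ?_)
    (isOpen_lt ?_ ?_))) <;> fun_prop

lemma interior_trapezoid_subset :
    interior (trapezoid a b c d) ⊆ {p | 0 < p 1 ∧ p 1 < 1} := by
  have hopen : IsOpenMap fun p : EuclideanSpace ℝ (Fin 2) ↦ p 1 :=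
    (EuclideanSpace.proj (𝕜 := ℝ) (1 : Fin 2)).isOpenMap fun y ↦ ⟨pt 0 y, rfl⟩
  have hpre := hopen.preimage_interior_eq_interior_preimage (by fun_prop) (Icc 0 1)
  rw [interior_Icc] at hpre
  exact (interior_mono fun p (hp : p ∈ trapezoid a b c d) ↦ (⟨hp.1, hp.2.1⟩ : p 1 ∈ Icc 0 1)).trans
    hpre.symm.subset

lemma frontier_trapezoid_subset :
    frontier (trapezoid a b c d) ⊆
      segment ℝ (pt a 0) (pt b 0) ∪ segment ℝ (pt c 1) (pt d 1) ∪
        segment ℝ (pt a 0) (pt c 1) ∪ segment ℝ (pt b 0) (pt d 1) := by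
  rintro p ⟨hcl, hint⟩
  obtain ⟨h0, h1, hl, hr⟩ := isClosed_trapezoid.closure_eq ▸ hcl
  rw [← pt_eta p]
  rcases h0.eq_or_lt with e0 | e0
  · rw [← e0] at hl hr ⊢
    exact .inl <| .inl <| .inl <| pt_mem_segment_of_mem_Icc _ ⟨by linarith, by linarith⟩
  rcases h1.eq_or_lt with e1 | e1
  · rw [e1] at hl hr ⊢
    exact .inl <| .inl <| .inr <| pt_mem_segment_of_mem_Icc _ ⟨by linarith, by linarith⟩
  rcases hl.eq_or_lt with el | el
  · exact .inl <| .inr <| el ▸ pt_mem_segment_of_mem_Icc_zero_one a c ⟨h0, h1⟩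
  rcases hr.eq_or_lt with er | er
  · exact .inr <| er ▸ pt_mem_segment_of_mem_Icc_zero_one b d ⟨h0, h1⟩
  exact absurd (setOf_lt_subset_interior_trapezoid ⟨e0, e1, el, er⟩) hint

lemma segment_union_segment_subset_frontier_trapezoid (hab : a ≤ b) (hcd : c ≤ d) :
    segment ℝ (pt a 0) (pt b 0) ∪ segment ℝ (pt c 1) (pt d 1) ⊆
      frontier (trapezoid a b c d) := by
  have hvert := vertices_subset_trapezoid hab hcd
  rintro p (hp | hp) <;> refine ⟨subset_closure ?_, fun hint ↦ ?_⟩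
  · exact convex_trapezoid.segment_subset (hvert (by simp)) (hvert (by simp)) hp
  · exact (interior_trapezoid_subset hint).1.ne' (apply_one_eq_of_mem_segment hp)
  · exact convex_trapezoid.segment_subset (hvert (by simp)) (hvert (by simp)) hp
  · exact (interior_trapezoid_subset hint).2.ne (apply_one_eq_of_mem_segment hp)

lemma hausdorffMeasure_frontier_trapezoid_le (hab : a ≤ b) (hcd : c ≤ d) :
    μH[1] (frontier (trapezoid a b c d)) ≤
      ENNReal.ofReal ((b - a) + (d - c) + √(1 + (c - a) ^ 2) + √(1 + (d - b) ^ 2)) := by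
  calc μH[1] (frontier (trapezoid a b c d))
      ≤ μH[1] (segment ℝ (pt a 0) (pt b 0)) + μH[1] (segment ℝ (pt c 1) (pt d 1)) +
          μH[1] (segment ℝ (pt a 0) (pt c 1)) + μH[1] (segment ℝ (pt b 0) (pt d 1)) :=
        (measure_mono frontier_trapezoid_subset).trans <| (measure_union_le _ _).trans <|
          add_le_add_left ((measure_union_le _ _).trans <|
            add_le_add_left (measure_union_le _ _) _) _
    _ = _ := by
        rw [hausdorffMeasure_segment_horizontal _ hab, hausdorffMeasure_segment_horizontal _ hcd,
          hausdorffMeasure_segment_slanted, hausdorffMeasure_segment_slanted,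
          ← ENNReal.ofReal_add (by linarith) (by linarith),
          ← ENNReal.ofReal_add (by positivity) (by positivity),
          ← ENNReal.ofReal_add (by positivity) (by positivity)]

lemma toReal_hausdorffMeasure_frontier_trapezoid_le {M : ℝ} (hab : a ≤ b) (hcd : c ≤ d)
    (ha : 0 ≤ a) (hc : 0 ≤ c) (hbM : b ≤ M) (hdM : d ≤ M) :
    (μH[1] (frontier (trapezoid a b c d))).toReal ≤ 2 * M + 2 := by
  have hsqrt : ∀ x : ℝ, √(1 + x ^ 2) ≤ 1 + |x| := fun x ↦
    Real.sqrt_le_iff.2 ⟨by positivity, by nlinarith [sq_abs x, abs_nonneg x]⟩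
  have hca : |c - a| ≤ c + a := abs_sub_le_iff.2 ⟨by linarith, by linarith⟩
  have hdb : |d - b| ≤ 2 * M - b - d := abs_sub_le_iff.2 ⟨by linarith, by linarith⟩
  refine ENNReal.toReal_le_of_le_ofReal (by linarith)
    ((hausdorffMeasure_frontier_trapezoid_le hab hcd).trans (ENNReal.ofReal_le_ofReal ?_))
  linarith [hsqrt (c - a), hsqrt (d - b)]

lemma le_toReal_hausdorffMeasure_frontier_trapezoid (hab : a ≤ b) (hcd : c ≤ d) :
    (b - a) + (d - c) ≤ (μH[1] (frontier (trapezoid a b c d))).toReal := by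
  have hdisj : Disjoint (segment ℝ (pt a 0) (pt b 0)) (segment ℝ (pt c 1) (pt d 1)) :=
    Set.disjoint_left.2 fun p h₀ h₁ ↦ by
      simpa [apply_one_eq_of_mem_segment h₀] using apply_one_eq_of_mem_segment h₁
  have hmeas : MeasurableSet (segment ℝ (pt c 1) (pt d 1)) :=
    (segment_eq_image ℝ (pt c 1) (pt d 1) ▸
      isCompact_Icc.image (by fun_prop)).isClosed.measurableSet
  have hfin : μH[1] (frontier (trapezoid a b c d)) ≠ ⊤ :=
    ((hausdorffMeasure_frontier_trapezoid_le hab hcd).trans_lt ENNReal.ofReal_lt_top).ne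
  rw [← ENNReal.toReal_ofReal (by linarith : 0 ≤ (b - a) + (d - c))]
  refine ENNReal.toReal_mono hfin ?_
  calc ENNReal.ofReal ((b - a) + (d - c))
      = μH[1] (segment ℝ (pt a 0) (pt b 0) ∪ segment ℝ (pt c 1) (pt d 1)) := by
        rw [measure_union hdisj hmeas, hausdorffMeasure_segment_horizontal _ hab,
          hausdorffMeasure_segment_horizontal _ hcd, ENNReal.ofReal_add (by linarith) (by linarith)]
    _ ≤ _ := measure_mono (segment_union_segment_subset_frontier_trapezoid hab hcd)

end trapezoid

section binary

variable {u : ℕ → ℝ}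

lemma pt_mem_polyCurve {N : ℕ} (hN : 0 < N) {i : ℕ} (hi : i ≤ N) : pt i (u i) ∈ polyCurve u N := by
  rcases hi.lt_or_eq with hi | rfl
  · exact mem_biUnion (Finset.mem_range.2 hi) (left_mem_segment ℝ _ _)
  · obtain ⟨j, rfl⟩ := Nat.exists_eq_add_one_of_ne_zero hN.ne'
    refine mem_biUnion (Finset.mem_range.2 j.lt_add_one) ?_
    exact_mod_cast right_mem_segment ℝ _ _

lemma convexHull_polyCurve_eq_trapezoid (hvals : ∀ n, u n = 0 ∨ u n = 1) {N a b c d : ℕ}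
    (ha : IsLeast {i | i ≤ N ∧ u i = 0} a) (hb : IsGreatest {i | i ≤ N ∧ u i = 0} b)
    (hc : IsLeast {i | i ≤ N ∧ u i = 1} c) (hd : IsGreatest {i | i ≤ N ∧ u i = 1} d) :
    convexHull ℝ (polyCurve u N) = trapezoid a b c d := by
  have hN : 0 < N := Nat.pos_of_ne_zero fun hN ↦ by
    obtain rfl : a = 0 := Nat.le_zero.1 (hN ▸ ha.1.1)
    obtain rfl : c = 0 := Nat.le_zero.1 (hN ▸ hc.1.1)
    exact zero_ne_one (ha.1.2.symm.trans hc.1.2)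
  have hab : (a : ℝ) ≤ b := by exact_mod_cast ha.2 hb.1
  have hcd : (c : ℝ) ≤ d := by exact_mod_cast hc.2 hd.1
  have hvertex : ∀ j ≤ N, pt j (u j) ∈ trapezoid a b c d := fun j hj ↦ by
    rcases hvals j with h | h <;> rw [h] <;> refine pt_mem_trapezoid (by norm_num) ?_ ?_ <;>
      norm_num
    · exact_mod_cast ha.2 ⟨hj, h⟩
    · exact_mod_cast hb.2 ⟨hj, h⟩
    · exact_mod_cast hc.2 ⟨hj, h⟩
    · exact_mod_cast hd.2 ⟨hj, h⟩
  refine (convexHull_min ?_ convex_trapezoid).antisymm ?_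
  · simp only [polyCurve, iUnion_subset_iff, Finset.mem_range]
    intro i hi
    refine convex_trapezoid.segment_subset (hvertex i hi.le) ?_
    exact_mod_cast hvertex (i + 1) hi
  · rw [← convexHull_eq_trapezoid hab hcd]
    refine convexHull_mono ?_
    rintro p (rfl | rfl | rfl | rfl | rfl)
    · simpa [ha.1.2] using pt_mem_polyCurve (u := u) hN ha.1.1
    · simpa [hb.1.2] using pt_mem_polyCurve (u := u) hN hb.1.1
    · simpa [hc.1.2] using pt_mem_polyCurve (u := u) hN hc.1.1
    · simpa [hd.1.2] using pt_mem_polyCurve (u := u) hN hd.1.1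

lemma polyLength_eq (hvals : ∀ n, u n = 0 ∨ u n = 1) (h11 : ∀ n, ¬ (u n = 1 ∧ u (n + 1) = 1))
    (N : ℕ) : polyLength u N = N + (√2 - 1) * ∑ i ∈ Finset.range N, (u i + u (i + 1)) := by
  have hstep : ∀ i, √(1 + (u (i + 1) - u i) ^ 2) = 1 + (√2 - 1) * (u i + u (i + 1)) := fun i ↦ by
    have := h11 i
    rcases hvals i with h | h <;> rcases hvals (i + 1) with h' | h' <;> simp_all <;> norm_num
  rw [polyLength, Finset.sum_congr rfl fun i _ ↦ hstep i, Finset.sum_add_distrib, ← Finset.mul_sum]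
  simp

lemma polyDelta_mem_Icc (hvals : ∀ n, u n = 0 ∨ u n = 1)
    (h11 : ∀ n, ¬ (u n = 1 ∧ u (n + 1) = 1)) {c N : ℕ} (hc : u c = 1) (hcN : c < N) :
    polyDelta u N ∈ Icc ((N : ℝ) + Nat.findGreatest (u · = 1) N - (c + 2)) (2 * N + 2) := by
  have hzero_pair : ∀ n, u n = 0 ∨ u (n + 1) = 0 := fun n ↦
    (hvals n).imp_right fun h ↦ (hvals (n + 1)).resolve_right (h11 n ⟨h, ·⟩)
  obtain ⟨z, hz1, hz⟩ : ∃ z ≤ 1, u z = 0 := (hzero_pair 0).elim (⟨0, zero_le_one, ·⟩) (⟨1, le_rfl, ·⟩)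
  obtain ⟨M, rfl⟩ := Nat.exists_eq_add_one_of_ne_zero (by omega : N ≠ 0)
  obtain ⟨y, hyM, hyN, hy⟩ : ∃ y, M ≤ y ∧ y ≤ M + 1 ∧ u y = 0 :=
    (hzero_pair M).elim (⟨M, le_rfl, M.le_succ, ·⟩) (⟨M + 1, M.le_succ, le_rfl, ·⟩)
  have hzero : ∃ n, u n = 0 := ⟨z, hz⟩
  have hone : ∃ n, u n = 1 := ⟨c, hc⟩
  have ha := Nat.isLeast_find_of_find_le hzero (N := M + 1) (by linarith [Nat.find_min' hzero hz])
  have hb := Nat.isGreatest_findGreatest (P := (u · = 0)) hyN hy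
  have hc' := Nat.isLeast_find_of_find_le hone (N := M + 1) (by linarith [Nat.find_min' hone hc])
  have hd := Nat.isGreatest_findGreatest (P := (u · = 1)) hcN.le hc
  have hab : (Nat.find hzero : ℝ) ≤ Nat.findGreatest (u · = 0) (M + 1) := by
    exact_mod_cast ha.2 hb.1
  have hcd : (Nat.find hone : ℝ) ≤ Nat.findGreatest (u · = 1) (M + 1) := by
    exact_mod_cast hc'.2 hd.1
  rw [polyDelta, convexHull_polyCurve_eq_trapezoid hvals ha hb hc' hd]
  refine ⟨(le_toReal_hausdorffMeasure_frontier_trapezoid hab hcd).trans' ?_,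
    toReal_hausdorffMeasure_frontier_trapezoid_le hab hcd (by positivity) (by positivity)
      (by exact_mod_cast hb.1.1) (by exact_mod_cast hd.1.1)⟩
  have : (M : ℝ) ≤ Nat.findGreatest (u · = 0) (M + 1) := by
    exact_mod_cast hyM.trans (hb.2 ⟨hyN, hy⟩)
  have : (Nat.find hzero : ℝ) ≤ 1 := by exact_mod_cast (Nat.find_min' hzero hz).trans hz1
  have : (Nat.find hone : ℝ) ≤ c := by exact_mod_cast Nat.find_min' hone hc
  push_cast
  linarith

lemma sum_range_eq_card_filter (hvals : ∀ n, u n = 0 ∨ u n = 1) (N : ℕ) :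
    ∑ i ∈ Finset.range N, u i = #{n ∈ Finset.range N | u n = 1} := by
  rw [← Finset.sum_boole]
  refine Finset.sum_congr rfl fun i _ ↦ ?_
  rcases hvals i with h | h <;> simp [h]

variable {α : ℝ}

lemma tendsto_polyLength_div (hvals : ∀ n, u n = 0 ∨ u n = 1)
    (h11 : ∀ n, ¬ (u n = 1 ∧ u (n + 1) = 1))
    (hfreq : Tendsto (fun N : ℕ ↦ (#{n ∈ Finset.range N | u n = 1} : ℝ) / N) atTop (𝓝 α)) :
    Tendsto (fun N : ℕ ↦ polyLength u N / N) atTop (𝓝 (1 + 2 * (√2 - 1) * α)) := by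
  simp only [← sum_range_eq_card_filter hvals] at hfreq
  have h := (((hfreq.add (tendsto_comp_succ_div_natCast hfreq)).sub
    (tendsto_const_div_atTop_nhds_zero_nat (u 0))).const_mul (√2 - 1)).const_add 1
  rw [show 1 + (√2 - 1) * (α + α - 0) = 1 + 2 * (√2 - 1) * α by ring] at h
  refine h.congr' <| (eventually_ne_atTop 0).mono fun N hN ↦ ?_
  have : (N : ℝ) ≠ 0 := Nat.cast_ne_zero.2 hN
  change _ = polyLength u N / N
  rw [polyLength_eq hvals h11, Finset.sum_add_distrib, Finset.sum_range_succ' u N]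
  field_simp
  ring

lemma tendsto_polyDelta_div (hα : 0 < α) (hvals : ∀ n, u n = 0 ∨ u n = 1)
    (h11 : ∀ n, ¬ (u n = 1 ∧ u (n + 1) = 1))
    (hfreq : Tendsto (fun N : ℕ ↦ (#{n ∈ Finset.range N | u n = 1} : ℝ) / N) atTop (𝓝 α)) :
    Tendsto (fun N : ℕ ↦ polyDelta u N / N) atTop (𝓝 2) := by
  obtain ⟨c, hc⟩ : ∃ c, u c = 1 := by
    by_contra! h
    refine hα.ne' (tendsto_nhds_unique hfreq ?_)
    simp [Finset.filter_false_of_mem fun n _ ↦ h n]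
  have hlower := ((tendsto_findGreatest_div_natCast hα hfreq).const_add 1).sub
    (tendsto_const_div_atTop_nhds_zero_nat ((c : ℝ) + 2))
  have hupper := (tendsto_const_div_atTop_nhds_zero_nat (2 : ℝ)).const_add 2
  rw [show (1 : ℝ) + 1 - 0 = 2 by norm_num] at hlower
  rw [add_zero] at hupper
  refine tendsto_of_tendsto_of_tendsto_of_le_of_le' hlower hupper ?_ ?_ <;>
    filter_upwards [eventually_gt_atTop c] with N hN <;>
    have hN0 : (0 : ℝ) < N := by exact_mod_cast c.zero_le.trans_lt hN
  · calc 1 + (Nat.findGreatest (u · = 1) N : ℝ) / N - (c + 2) / N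
        = ((N : ℝ) + Nat.findGreatest (u · = 1) N - (c + 2)) / N := by field_simp
      _ ≤ polyDelta u N / N := by gcongr; exact (polyDelta_mem_Icc hvals h11 hc hN).1
  · calc polyDelta u N / N ≤ (2 * N + 2) / N := by
          gcongr; exact (polyDelta_mem_Icc hvals h11 hc hN).2
      _ = 2 + 2 / N := by field_simp

end binary

/-- Inconstancy of a binary sequence avoiding the block `11` whose frequency of `1`'s is
`α ∈ (0, 1/2)` (in particular of a Sturmian sequence of slope `α` avoiding `11`): the
inconstancy exists, equals `1 + 2(√2 − 1)α`, and lies in the open interval `(1, √2)`. -/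
theorem polyIncon_sturmian (α : ℝ) (hα0 : 0 < α) (hα2 : α < 1 / 2) (u : ℕ → ℝ)
    (hvals : ∀ n, u n = 0 ∨ u n = 1)
    (h11 : ∀ n, ¬ (u n = 1 ∧ u (n + 1) = 1))
    (hfreq : Tendsto
      (fun N : ℕ => (((Finset.range N).filter fun n => u n = 1).card : ℝ) / N)
      atTop (nhds α)) :
    Tendsto (fun N : ℕ => polyIncon u N) atTop
      (nhds (1 + 2 * (Real.sqrt 2 - 1) * α)) ∧
    1 < 1 + 2 * (Real.sqrt 2 - 1) * α ∧
    1 + 2 * (Real.sqrt 2 - 1) * α < Real.sqrt 2 := by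
  have hsqrt := Real.one_lt_sqrt_two
  refine ⟨?_, by nlinarith, by nlinarith⟩
  have h := ((tendsto_polyLength_div hvals h11 hfreq).const_mul 2).div
    (tendsto_polyDelta_div hα0 hvals h11 hfreq) two_ne_zero
  rw [mul_div_cancel_left₀ _ two_ne_zero] at h
  refine h.congr' <| (eventually_ne_atTop 0).mono fun N hN ↦ ?_
  change 2 * (polyLength u N / N) / (polyDelta u N / N) = polyIncon u N
  rw [polyIncon, ← mul_div_assoc, div_div_div_cancel_right₀ (Nat.cast_ne_zero.2 hN)]
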